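/- Given δ ≥ 0 there exist D ≥ 0 and C₁ ≥ 0 with the following property: if a, b, c, d are points of a δ-hyperbolic geodesic space Z such that b is a nearest point of a geodesic [b,c] to a (i.e. d(a,[b,c]) = d(a,b)), c is a nearest point of [b,c] to d, and d(b,c) ≥ D, then the concatenation [a,b] ∪ [b,c] ∪ [c,d] lies in the C₁-neighborhood of any geodesic joining a and d. -/
import Mathlib


open Metric Set Filter

/-- A geodesic parametrization from `a` to `b`, defined on `[0, dist a b]`. -/
def IsGeodParam {Y : Type*} [MetricSpace Y] (f : ℝ → Y) (a b : Y) : Prop :=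
  f 0 = a ∧ f (dist a b) = b ∧
    ∀ s ∈ Set.Icc (0:ℝ) (dist a b), ∀ t ∈ Set.Icc (0:ℝ) (dist a b),
      dist (f s) (f t) = |s - t|

/-- `σ` is a geodesic segment joining `a` and `b`. -/
def IsGeodSeg {Y : Type*} [MetricSpace Y] (σ : Set Y) (a b : Y) : Prop :=
  ∃ f, IsGeodParam f a b ∧ σ = f '' Set.Icc 0 (dist a b)

/-- A geodesic metric space. -/
def GeodesicSpace (Y : Type*) [MetricSpace Y] : Prop :=
  ∀ a b : Y, ∃ σ : Set Y, IsGeodSeg σ a b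

/-- Gromov δ-hyperbolicity via slim triangles. -/
def SlimTriangles (Y : Type*) [MetricSpace Y] (δ : ℝ) : Prop :=
  ∀ a b c : Y, ∀ s₁ s₂ s₃ : Set Y, IsGeodSeg s₁ a b → IsGeodSeg s₂ b c →
    IsGeodSeg s₃ a c → ∀ x ∈ s₃, ∃ y ∈ s₁ ∪ s₂, dist x y ≤ δ

/-- The Gromov product `(a,b)_c`. -/
noncomputable def gromovProd {Y : Type*} [MetricSpace Y] (c a b : Y) : ℝ :=
  (dist a c + dist b c - dist a b) / 2

/-- `q` is a point of `σ` nearest to `p`. -/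
def IsNearestPt {Y : Type*} [MetricSpace Y] (σ : Set Y) (p q : Y) : Prop :=
  q ∈ σ ∧ ∀ z ∈ σ, dist p q ≤ dist p z

/-- A `(K,ε)`-quasigeodesic (quasi-isometric embedding of an interval `I ⊆ ℝ`). -/
def QuasiGeodesicOn {Y : Type*} [MetricSpace Y] (K ε : ℝ) (f : ℝ → Y) (I : Set ℝ) : Prop :=
  ∀ s ∈ I, ∀ t ∈ I, |s - t| / K - ε ≤ dist (f s) (f t) ∧ dist (f s) (f t) ≤ K * |s - t| + ε

/-- A `(K,ε)`-quasi-isometric embedding. -/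
def QIEmbedding {Y Z : Type*} [MetricSpace Y] [MetricSpace Z] (K ε : ℝ) (f : Y → Z) : Prop :=
  ∀ x y : Y, dist x y / K - ε ≤ dist (f x) (f y) ∧ dist (f x) (f y) ≤ K * dist x y + ε

section Helpers

variable {Y : Type*} [MetricSpace Y]

lemma IsGeodParam.dist_left {f : ℝ → Y} {a b : Y}
    (h : IsGeodParam f a b) {t : ℝ} (ht : t ∈ Set.Icc 0 (dist a b)) :
    dist a (f t) = t := by
  have h0 : (0:ℝ) ∈ Set.Icc 0 (dist a b) := ⟨le_refl _, dist_nonneg⟩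
  have h2 := h.2.2 0 h0 t ht
  rw [h.1] at h2
  rw [h2, zero_sub, abs_neg, abs_of_nonneg ht.1]

lemma IsGeodParam.dist_right {f : ℝ → Y} {a b : Y}
    (h : IsGeodParam f a b) {t : ℝ} (ht : t ∈ Set.Icc 0 (dist a b)) :
    dist (f t) b = dist a b - t := by
  have h0 : dist a b ∈ Set.Icc 0 (dist a b) := ⟨dist_nonneg, le_refl _⟩
  have h2 := h.2.2 t ht (dist a b) h0
  rw [h.2.1] at h2
  rw [h2, abs_of_nonpos (by linarith [ht.2]), neg_sub]

lemma IsGeodSeg.left_mem {σ : Set Y} {a b : Y} (h : IsGeodSeg σ a b) : a ∈ σ := by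
  obtain ⟨f, hf, rfl⟩ := h
  exact ⟨0, ⟨le_refl _, dist_nonneg⟩, hf.1⟩

lemma IsGeodSeg.right_mem {σ : Set Y} {a b : Y} (h : IsGeodSeg σ a b) : b ∈ σ := by
  obtain ⟨f, hf, rfl⟩ := h
  exact ⟨dist a b, ⟨dist_nonneg, le_refl _⟩, hf.2.1⟩

lemma IsGeodSeg.symm {σ : Set Y} {a b : Y} (h : IsGeodSeg σ a b) : IsGeodSeg σ b a := by
  obtain ⟨f, hf, rfl⟩ := h
  refine ⟨fun s => f (dist a b - s), ⟨by simp [hf.2.1, dist_comm], by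
    simp [dist_comm b a, hf.1], ?_⟩, ?_⟩
  · intro s hs t ht
    rw [dist_comm b a] at hs ht
    have h2 := hf.2.2 (dist a b - s) ⟨by linarith [hs.2], by linarith [hs.1]⟩
      (dist a b - t) ⟨by linarith [ht.2], by linarith [ht.1]⟩
    rw [h2, show dist a b - s - (dist a b - t) = -(s - t) by ring, abs_neg]
  · rw [dist_comm b a]
    have himg : (fun s => f (dist a b - s)) '' Set.Icc 0 (dist a b)
        = f '' ((fun s => dist a b - s) '' Set.Icc 0 (dist a b)) := by
      rw [Set.image_image]
    rw [himg, Set.image_const_sub_Icc]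
    simp

lemma IsGeodParam.restrictSeg {f : ℝ → Y} {a b : Y}
    (h : IsGeodParam f a b) {t : ℝ} (ht : t ∈ Set.Icc 0 (dist a b)) :
    IsGeodSeg (f '' Set.Icc 0 t) a (f t) := by
  have hd : dist a (f t) = t := h.dist_left ht
  refine ⟨f, ⟨h.1, by rw [hd], ?_⟩, by rw [hd]⟩
  intro s hs u hu
  rw [hd] at hs hu
  exact h.2.2 s ⟨hs.1, hs.2.trans ht.2⟩ u ⟨hu.1, hu.2.trans ht.2⟩

lemma IsGeodSeg.dist_add_of_mem {σ : Set Y} {a b z : Y}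
    (h : IsGeodSeg σ a b) (hz : z ∈ σ) :
    dist a z + dist z b = dist a b := by
  obtain ⟨f, hf, rfl⟩ := h
  obtain ⟨t, ht, rfl⟩ := hz
  rw [hf.dist_left ht, hf.dist_right ht]
  ring

lemma gromov_def (c a b : Y) : gromovProd c a b = (dist a c + dist b c - dist a b) / 2 := rfl

lemma gromov_nonneg (c a b : Y) : 0 ≤ gromovProd c a b := by
  have h1 := dist_triangle a c b
  have h2 : dist c b = dist b c := dist_comm c b
  rw [gromov_def]
  linarith

lemma gromov_comm (c a b : Y) : gromovProd c a b = gromovProd c b a := by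
  rw [gromov_def, gromov_def, dist_comm a b]
  ring

lemma gromov_le_of_mem {σ : Set Y} {x y z : Y} (h : IsGeodSeg σ x y) (hz : z ∈ σ)
    (w : Y) : gromovProd w x y ≤ dist w z := by
  have hsum := h.dist_add_of_mem hz
  have h1 := dist_triangle x z w
  have h2 := dist_triangle y z w
  have c1 : dist y z = dist z y := dist_comm y z
  have c2 : dist w z = dist z w := dist_comm w z
  rw [gromov_def]
  linarith

variable {δ : ℝ}

lemma exists_near_gromov (hG : GeodesicSpace Y) (hS : SlimTriangles Y δ)
    {σ : Set Y} {x y : Y} (hσ : IsGeodSeg σ x y) (w : Y) :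
    ∃ p ∈ σ, dist w p ≤ gromovProd w x y + 2 * δ := by
  obtain ⟨f, hf, rfl⟩ := id hσ
  set t0 := gromovProd x w y with ht0def
  have e_t0 : t0 = (dist w x + dist y x - dist w y) / 2 := rfl
  have e_goal : gromovProd w x y = (dist x w + dist y w - dist x y) / 2 := rfl
  have c1 : dist w x = dist x w := dist_comm w x
  have c2 : dist y x = dist x y := dist_comm y x
  have c3 : dist w y = dist y w := dist_comm w y
  have ht0 : t0 ∈ Set.Icc 0 (dist x y) := by
    refine ⟨gromov_nonneg x w y, ?_⟩
    have htr := dist_triangle w y x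
    linarith
  have hp : f t0 ∈ f '' Set.Icc 0 (dist x y) := ⟨t0, ht0, rfl⟩
  refine ⟨f t0, hp, ?_⟩
  have hxp : dist x (f t0) = t0 := hf.dist_left ht0
  have hpy : dist (f t0) y = dist x y - t0 := hf.dist_right ht0
  obtain ⟨sxw, hsxw⟩ := hG x w
  obtain ⟨swy, hswy⟩ := hG w y
  obtain ⟨q, hq, hdq⟩ := hS x w y sxw swy _ hsxw hswy hσ (f t0) hp
  have cq : dist q (f t0) = dist (f t0) q := dist_comm q (f t0)
  rcases hq with hq | hq
  · have hsum := hsxw.dist_add_of_mem hq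
    have h1 := dist_triangle x q (f t0)
    have h2 := dist_triangle w q (f t0)
    have cwq : dist w q = dist q w := dist_comm w q
    linarith
  · have hsum := hswy.dist_add_of_mem hq
    have h1 := dist_triangle (f t0) q y
    have h2 := dist_triangle w q (f t0)
    linarith

/-- Four-point inequality from slim triangles. -/
lemma four_point (hG : GeodesicSpace Y) (hS : SlimTriangles Y δ) (w x y z : Y) :
    min (gromovProd w x z) (gromovProd w z y) ≤ gromovProd w x y + 3 * δ := by
  obtain ⟨sxy, hsxy⟩ := hG x y
  obtain ⟨sxz, hsxz⟩ := hG x z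
  obtain ⟨szy, hszy⟩ := hG z y
  obtain ⟨p, hp, hdp⟩ := exists_near_gromov hG hS hsxy w
  obtain ⟨q, hq, hdq⟩ := hS x z y sxz szy sxy hsxz hszy hsxy p hp
  have htr := dist_triangle w p q
  rcases hq with hq | hq
  · have h1 := gromov_le_of_mem hsxz hq w
    have hmin := min_le_left (gromovProd w x z) (gromovProd w z y)
    linarith
  · have h1 := gromov_le_of_mem hszy hq w
    have hmin := min_le_right (gromovProd w x z) (gromovProd w z y)
    linarith

/-- Nearest-point projection lower bound. -/
lemma proj_lower (hδ : 0 ≤ δ) (hG : GeodesicSpace Y) (hS : SlimTriangles Y δ)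
    {σ : Set Y} {p q a z : Y} (hσ : IsGeodSeg σ p q) (hn : IsNearestPt σ a p)
    (hz : z ∈ σ) : dist a p + dist p z - 4 * δ ≤ dist a z := by
  obtain ⟨f, hf, rfl⟩ := id hσ
  obtain ⟨t, ht, rfl⟩ := hz
  rw [hf.dist_left ht]
  by_cases hct : t ≤ 2 * δ
  · have hn2 := hn.2 (f t) ⟨t, ht, rfl⟩
    linarith
  · push_neg at hct
    have hle : ∀ ε : ℝ, 0 < ε → dist a p + t - 4 * δ ≤ dist a (f t) + ε := by
      intro ε hε
      set s := min (2 * δ + ε) t with hsdef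
      have hs1 : 2 * δ < s := lt_min (by linarith) hct
      have hs2 : s ≤ t := min_le_right _ _
      have hs3 : s ≤ 2 * δ + ε := min_le_left _ _
      have hsI : s ∈ Set.Icc 0 (dist p q) := ⟨by linarith, hs2.trans ht.2⟩
      have hdp' : dist p (f s) = s := hf.dist_left hsI
      have hres : IsGeodSeg (f '' Set.Icc 0 t) p (f t) := hf.restrictSeg ht
      have hp'mem : f s ∈ f '' Set.Icc 0 t := ⟨s, ⟨by linarith, hs2⟩, rfl⟩
      obtain ⟨spa, hspa⟩ := hG p a
      obtain ⟨saz, hsaz⟩ := hG a (f t)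
      obtain ⟨y, hy, hdy⟩ := hS p a (f t) spa saz _ hspa hsaz hres (f s) hp'mem
      have hnear : dist a p ≤ dist a (f s) := hn.2 (f s) ⟨s, hsI, rfl⟩
      have hay : dist a (f s) ≤ dist a y + dist y (f s) := dist_triangle a y (f s)
      have cy : dist y (f s) = dist (f s) y := dist_comm y (f s)
      rcases hy with hy | hy
      · exfalso
        have hsum := hspa.dist_add_of_mem hy
        have h2 := dist_triangle p y (f s)
        have c1 : dist y a = dist a y := dist_comm y a
        have c2 : dist p a = dist a p := dist_comm p a
        linarith
      · have hsum := hsaz.dist_add_of_mem hy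
        have hst : dist (f s) (f t) = t - s := by
          rw [hf.2.2 s hsI t ht, abs_of_nonpos (by linarith), neg_sub]
        have h2 := dist_triangle (f s) y (f t)
        linarith
    by_contra hcon
    push_neg at hcon
    have := hle ((dist a p + t - 4 * δ - dist a (f t)) / 2) (by linarith)
    linarith

end Helpers


/-- If `a` and `d` project to the endpoints `b`, `c` of a geodesic `[b,c]` and
`d(b,c) ≥ D`, then `[a,b] ∪ [b,c] ∪ [c,d]` lies in a `C₁`-neighborhood of any
geodesic joining `a` and `d`. -/
theorem stmt4 (δ : ℝ) (hδ : 0 ≤ δ) :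
    ∃ D C₁ : ℝ, 0 ≤ D ∧ 0 ≤ C₁ ∧
      ∀ (Z : Type) (_ : MetricSpace Z), GeodesicSpace Z → SlimTriangles Z δ →
        ∀ (a b c d : Z) (sab sbc scd sad : Set Z),
          IsGeodSeg sab a b → IsGeodSeg sbc b c → IsGeodSeg scd c d →
          IsNearestPt sbc a b → IsNearestPt sbc d c → D ≤ dist b c →
          IsGeodSeg sad a d →
            ∀ x ∈ sab ∪ sbc ∪ scd, Metric.infDist x sad ≤ C₁ := by
  refine ⟨7 * δ + 1, 9 * δ, by linarith, by linarith, ?_⟩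
  intro Z _ hG hS a b c d sab sbc scd sad hsab hsbc hscd hna hnd hD hsad x hx
  have hAC : dist a b + dist b c - 4 * δ ≤ dist a c :=
    proj_lower hδ hG hS hsbc hna hsbc.right_mem
  have hDB : dist d c + dist c b - 4 * δ ≤ dist d b :=
    proj_lower hδ hG hS hsbc.symm hnd hsbc.symm.right_mem
  have ccb : dist c b = dist b c := dist_comm c b
  have cca : dist c a = dist a c := dist_comm c a
  have cdc : dist d c = dist c d := dist_comm d c
  have cdb : dist d b = dist b d := dist_comm d b
  have cda : dist d a = dist a d := dist_comm d a
  have cba : dist b a = dist a b := dist_comm b a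
  -- (d,a)_b ≤ 5δ
  have hb5 : gromovProd b d a ≤ 5 * δ := by
    have h4 := four_point hG hS b c a d
    have e1 : gromovProd b c a = (dist c b + dist a b - dist c a) / 2 := rfl
    have e2 : gromovProd b c d = (dist c b + dist d b - dist c d) / 2 := rfl
    have ccd : dist c d = dist c d := rfl
    have hsmall : gromovProd b c a ≤ 2 * δ := by rw [e1]; linarith
    have hbig : 5 * δ + 1 ≤ gromovProd b c d := by rw [e2]; linarith
    have hmin : min (gromovProd b c d) (gromovProd b d a) ≤ 5 * δ := by linarith
    rcases min_le_iff.1 hmin with h | h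
    · linarith
    · exact h
  -- lower bound on dist a d
  have hAD : dist a b + dist b c + dist c d - 14 * δ ≤ dist a d := by
    have e : gromovProd b d a = (dist d b + dist a b - dist d a) / 2 := rfl
    rw [e] at hb5
    linarith
  -- (a,d)_c ≤ 5δ
  have hc5 : gromovProd c a d ≤ 5 * δ := by
    have h4 := four_point hG hS c b d a
    have e1 : gromovProd c b d = (dist b c + dist d c - dist b d) / 2 := rfl
    have e2 : gromovProd c b a = (dist b c + dist a c - dist b a) / 2 := rfl
    have hsmall : gromovProd c b d ≤ 2 * δ := by rw [e1]; linarith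
    have hbig : 5 * δ + 1 ≤ gromovProd c b a := by rw [e2]; linarith
    have hmin : min (gromovProd c b a) (gromovProd c a d) ≤ 5 * δ := by linarith
    rcases min_le_iff.1 hmin with h | h
    · linarith
    · exact h
  obtain ⟨pnt, hpmem, hple⟩ := exists_near_gromov hG hS hsad x
  have hinf : Metric.infDist x sad ≤ dist x pnt := Metric.infDist_le_dist_of_mem hpmem
  have exad : gromovProd x a d = (dist a x + dist d x - dist a d) / 2 := rfl
  rcases hx with (hx | hx) | hx
  · -- x ∈ [a,b]
    have hsum := hsab.dist_add_of_mem hx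
    have h1 := dist_triangle d b x
    have eb : gromovProd b d a = (dist d b + dist a b - dist d a) / 2 := rfl
    have cbx : dist b x = dist x b := dist_comm b x
    rw [eb] at hb5
    rw [exad] at hple
    linarith
  · -- x ∈ [b,c]
    have hsum := hsbc.dist_add_of_mem hx
    have h1 := dist_triangle a b x
    have h2 := dist_triangle d c x
    have ccx : dist c x = dist x c := dist_comm c x
    rw [exad] at hple
    linarith
  · -- x ∈ [c,d]
    have hsum := hscd.dist_add_of_mem hx
    have h1 := dist_triangle a c x
    have ec : gromovProd c a d = (dist a c + dist d c - dist a d) / 2 := rfl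
    have cdx : dist d x = dist x d := dist_comm d x
    rw [ec] at hc5
    rw [exad] at hple
    linarith
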